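/- arXiv:1502.03517 — 4 statements merged into one kernel-verified Lean document; each statement's English description precedes it below -/
import Mathlib

section
/- If r is a vector in R_α (i.e., r : C → ℕ satisfies r(S) ≥ |⋂_{j∈C\S} H_j^c| for all proper subsets S ⊊ C and ∑_{j∈C} r_j = α), and X, Y ⊊ C are tight sets of r (meaning r(X) = |⋂_{j∈C\X} H_j^c| and r(Y) = |⋂_{j∈C\Y} H_j^c|) with X ∩ Y ≠ ∅ and X ∪ Y ≠ C, then X ∩ Y is also a tight set of r. -/
/-!
Tightness of crossing sets is the usual uncrossing argument: `S ↦ missing P H S` is supermodular,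
because the packets missing outside `X ∩ Y` are exactly those missing outside `X` and outside `Y`,
while those missing outside `X` or outside `Y` are all missing outside `X ∪ Y`. Since `S ↦ r(S)` is
modular, `r(S) - missing S` is submodular, and it is nonnegative on `X ∩ Y` and `X ∪ Y` and
vanishes on `X` and `Y`; hence it vanishes on `X ∩ Y`.
-/

/-- Number of packets missing at every client outside `S`. -/
def missing {β C : Type*} [DecidableEq β] [Fintype C] [DecidableEq C]
    (P : Finset β) (H : C → Finset β) (S : Finset C) : ℕ :=
  (P.filter (fun p => ∀ j ∈ Finset.univ \ S, p ∈ P \ H j)).card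

open Finset

theorem sum_inter_eq_of_supermodular {ι : Type*} [DecidableEq ι] (f : Finset ι → ℕ) (r : ι → ℕ)
    {X Y : Finset ι} (hsuper : f X + f Y ≤ f (X ∩ Y) + f (X ∪ Y))
    (hinter : f (X ∩ Y) ≤ ∑ j ∈ X ∩ Y, r j) (hunion : f (X ∪ Y) ≤ ∑ j ∈ X ∪ Y, r j)
    (hX : ∑ j ∈ X, r j = f X) (hY : ∑ j ∈ Y, r j = f Y) :
    ∑ j ∈ X ∩ Y, r j = f (X ∩ Y) := by
  have hmodular := sum_union_inter (s₁ := X) (s₂ := Y) (f := r)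
  omega

section MissingPackets

variable {β C : Type*} [DecidableEq β] [Fintype C] [DecidableEq C]
  (P : Finset β) (H : C → Finset β)

def missingPackets (S : Finset C) : Finset β :=
  P.filter fun p => ∀ j ∈ univ \ S, p ∈ P \ H j

theorem missing_eq_card_missingPackets (S : Finset C) :
    missing P H S = (missingPackets P H S).card := rfl

theorem missingPackets_mono {S T : Finset C} (hST : S ⊆ T) :
    missingPackets P H S ⊆ missingPackets P H T :=
  monotone_filter_right P fun _ _ hp j hj => hp j (sdiff_subset_sdiff subset_rfl hST hj)

theorem missingPackets_inter (X Y : Finset C) :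
    missingPackets P H (X ∩ Y) = missingPackets P H X ∩ missingPackets P H Y := by
  ext p
  simp only [missingPackets, mem_inter, mem_filter, mem_sdiff, mem_univ, true_and]
  constructor
  · rintro ⟨hp, h⟩
    exact ⟨⟨hp, fun j hj => h j fun hjXY => hj hjXY.1⟩, ⟨hp, fun j hj => h j fun hjXY => hj hjXY.2⟩⟩
  · rintro ⟨⟨hp, hX⟩, -, hY⟩
    refine ⟨hp, fun j hj => ?_⟩
    by_cases hjX : j ∈ X
    · exact hY j fun hjY => hj ⟨hjX, hjY⟩
    · exact hX j hjX

theorem missing_supermodular (X Y : Finset C) :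
    missing P H X + missing P H Y ≤ missing P H (X ∩ Y) + missing P H (X ∪ Y) := by
  simp only [missing_eq_card_missingPackets, missingPackets_inter]
  calc (missingPackets P H X).card + (missingPackets P H Y).card
      = (missingPackets P H X ∪ missingPackets P H Y).card
          + (missingPackets P H X ∩ missingPackets P H Y).card :=
        (card_union_add_card_inter _ _).symm
    _ ≤ (missingPackets P H (X ∪ Y)).card
          + (missingPackets P H X ∩ missingPackets P H Y).card := by
        gcongr
        exact union_subset (missingPackets_mono P H subset_union_left)
          (missingPackets_mono P H subset_union_right)
    _ = _ := add_comm _ _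

end MissingPackets

theorem tight_inter_tight_general {β C : Type*} [DecidableEq β] [Fintype C] [DecidableEq C]
    (P : Finset β) (H : C → Finset β) (r : C → ℕ)
    (hfeas : ∀ S : Finset C, S ⊂ Finset.univ → missing P H S ≤ ∑ j ∈ S, r j)
    (X Y : Finset C) (hXss : X ⊂ Finset.univ)
    (hXt : ∑ j ∈ X, r j = missing P H X)
    (hYt : ∑ j ∈ Y, r j = missing P H Y)
    (hcup : X ∪ Y ≠ Finset.univ) :
    ∑ j ∈ X ∩ Y, r j = missing P H (X ∩ Y) :=
  sum_inter_eq_of_supermodular (missing P H) r (missing_supermodular P H X Y)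
    (hfeas _ (lt_of_le_of_lt inter_subset_left hXss))
    (hfeas _ (lt_of_le_of_ne (subset_univ _) hcup)) hXt hYt

/-- The intersection of two crossing tight sets is tight. -/
theorem tight_inter_tight {β C : Type*} [DecidableEq β] [Fintype C] [DecidableEq C]
    (P : Finset β) (H : C → Finset β) (α : ℕ) (r : C → ℕ)
    (hfeas : ∀ S : Finset C, S ⊂ Finset.univ → missing P H S ≤ ∑ j ∈ S, r j)
    (hsum : ∑ j, r j = α)
    (X Y : Finset C) (hXss : X ⊂ Finset.univ) (hYss : Y ⊂ Finset.univ)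
    (hXt : ∑ j ∈ X, r j = missing P H X)
    (hYt : ∑ j ∈ Y, r j = missing P H Y)
    (hne : X ∩ Y ≠ ∅) (hcup : X ∪ Y ≠ Finset.univ) :
    ∑ j ∈ X ∩ Y, r j = missing P H (X ∩ Y) :=
  tight_inter_tight_general P H r hfeas X Y hXss hXt hYt hcup
end

section
/- If a set function f : 2^C → ℝ is submodular, then its base polyhedron B(f) = { x ∈ ℝ^C : x(S) ≤ f(S) for all S ⊆ C, x(C) = f(C) } has the property that for x, y ∈ B(f) and any u with x_u > y_u, the set of tight sets of x containing u but avoiding some v with x_v < y_v determines an exchange: there exists v with x_v < y_v and ε > 0 such that x − ε·e_u + ε·e_v ∈ B(f). (Exchange property of base polyhedra.) -/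
/-- Membership in the base polyhedron `B(f)`. -/
def memBase {C : Type*} [Fintype C] [DecidableEq C]
    (f : Finset C → ℝ) (x : C → ℝ) : Prop :=
  (∀ S : Finset C, ∑ j ∈ S, x j ≤ f S) ∧ ∑ j, x j = f Finset.univ

/-!
Let `A` be the union of the `x`-tight sets avoiding `u`. By submodularity `A` is itself tight
(or empty), so `y(A) ≤ f(A) = x(A)`. Since `x(C) = y(C)` and `x_u > y_u` with `u ∉ A`, some
`v ∉ A` has `x_v < y_v`. No set containing `v` but not `u` is tight, so moving a small amount `ε`
of mass from `u` to `v` violates none of the finitely many constraints.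
-/

open Finset Filter Topology

theorem exists_pos_forall_le {ι : Type*} [Finite ι] {p : ι → Prop} {g : ι → ℝ}
    (hg : ∀ i, p i → 0 < g i) : ∃ ε > 0, ∀ i, p i → ε ≤ g i :=
  (eventually_mem_nhdsWithin.and (eventually_all.2 fun i => eventually_imp_distrib_left.2 fun hi =>
    (eventually_le_nhds (hg i hi)).filter_mono nhdsWithin_le_nhds)).exists (f := 𝓝[>] (0 : ℝ))

section BasePolyhedron

variable {C : Type*} [DecidableEq C]

def IsTight (f : Finset C → ℝ) (x : C → ℝ) (S : Finset C) : Prop :=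
  ∑ j ∈ S, x j = f S

theorem IsTight.union {f : Finset C → ℝ}
    (hsub : ∀ X Y : Finset C, f (X ∪ Y) + f (X ∩ Y) ≤ f X + f Y) {x : C → ℝ}
    (hx : ∀ S, ∑ j ∈ S, x j ≤ f S) {S T : Finset C}
    (hS : IsTight f x S) (hT : IsTight f x T) : IsTight f x (S ∪ T) := by
  have hsum : ∑ j ∈ S ∪ T, x j + ∑ j ∈ S ∩ T, x j = ∑ j ∈ S, x j + ∑ j ∈ T, x j :=
    sum_union_inter
  unfold IsTight at *
  linarith [hx (S ∪ T), hx (S ∩ T), hsub S T]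

theorem exists_notMem_sum_le_forall_isTight_subset [Fintype C] {f : Finset C → ℝ}
    (hsub : ∀ X Y : Finset C, f (X ∪ Y) + f (X ∩ Y) ≤ f X + f Y) {x y : C → ℝ}
    (hx : ∀ S, ∑ j ∈ S, x j ≤ f S) (hy : ∀ S, ∑ j ∈ S, y j ≤ f S) (u : C) :
    ∃ A : Finset C, u ∉ A ∧ ∑ j ∈ A, y j ≤ ∑ j ∈ A, x j ∧
      ∀ S, u ∉ S → IsTight f x S → S ⊆ A := by
  classical
  set 𝒯 : Finset (Finset C) := univ.filter fun S => u ∉ S ∧ IsTight f x S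
  have hA : IsTight f x (𝒯.sup id) ∨ 𝒯.sup id = ∅ :=
    sup_induction (p := fun A => IsTight f x A ∨ A = ∅) (Or.inr rfl)
      (fun S hS T hT => by
        rcases hS with hS | rfl
        · rcases hT with hT | rfl
          · exact Or.inl (hS.union hsub hx hT)
          · simpa using Or.inl hS
        · simpa using hT)
      (fun S hS => Or.inl (mem_filter.1 hS).2.2)
  refine ⟨𝒯.sup id, fun hu => ?_, ?_, fun S huS hS => le_sup (f := id) (by simp [𝒯, huS, hS])⟩
  · obtain ⟨S, hS, huS⟩ := mem_sup.1 hu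
    exact (mem_filter.1 hS).2.1 huS
  · rcases hA with hA | hA
    · exact (hy _).trans_eq hA.symm
    · simp [hA]

theorem exists_notMem_lt_of_sum_le [Fintype C] {x y : C → ℝ} (hxy : ∑ j, x j = ∑ j, y j)
    {A : Finset C} (hA : ∑ j ∈ A, y j ≤ ∑ j ∈ A, x j) {u : C} (huA : u ∉ A) (hu : y u < x u) :
    ∃ v ∉ A, x v < y v := by
  by_contra! h
  have hcompl : ∑ j ∈ Aᶜ, y j < ∑ j ∈ Aᶜ, x j :=
    sum_lt_sum (fun j hj => h j (mem_compl.1 hj)) ⟨u, mem_compl.2 huA, hu⟩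
  linarith [sum_add_sum_compl A x, sum_add_sum_compl A y]

theorem sum_sub_smul_single_add_smul_single (x : C → ℝ) (ε : ℝ) (u v : C) (S : Finset C) :
    ∑ j ∈ S, (x - ε • (Pi.single u 1 : C → ℝ) + ε • (Pi.single v 1 : C → ℝ)) j
      = ∑ j ∈ S, x j - (if u ∈ S then ε else 0) + (if v ∈ S then ε else 0) := by
  simp [sum_add_distrib, sum_sub_distrib, Pi.single_apply]

theorem exists_pos_memBase_exchange [Fintype C] {f : Finset C → ℝ} {x : C → ℝ}
    (hx : memBase f x) {u v : C} (hslack : ∀ S, v ∈ S → u ∉ S → ∑ j ∈ S, x j < f S) :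
    ∃ ε : ℝ, 0 < ε ∧ memBase f (x - ε • (Pi.single u 1 : C → ℝ) + ε • (Pi.single v 1 : C → ℝ)) := by
  obtain ⟨ε, hε, hεS⟩ := exists_pos_forall_le (p := fun S => v ∈ S ∧ u ∉ S)
    (g := fun S => f S - ∑ j ∈ S, x j) fun S ⟨hvS, huS⟩ => sub_pos.2 (hslack S hvS huS)
  refine ⟨ε, hε, fun S => ?_, ?_⟩
  · rw [sum_sub_smul_single_add_smul_single]
    have := hx.1 S
    split_ifs with huS hvS hvS
    · linarith
    · linarith
    · linarith [hεS S ⟨hvS, huS⟩]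
    · linarith
  · rw [sum_sub_smul_single_add_smul_single]
    simpa using hx.2

end BasePolyhedron

/-- Exchange property of base polyhedra of submodular functions. -/
theorem base_polyhedron_exchange {C : Type*} [Fintype C] [DecidableEq C]
    (f : Finset C → ℝ)
    (hsub : ∀ X Y : Finset C, f (X ∪ Y) + f (X ∩ Y) ≤ f X + f Y)
    (x y : C → ℝ) (hx : memBase f x) (hy : memBase f y)
    (u : C) (hu : y u < x u) :
    ∃ v : C, x v < y v ∧ ∃ ε : ℝ, 0 < ε ∧
      memBase f (x - ε • (Pi.single u 1 : C → ℝ) + ε • (Pi.single v 1 : C → ℝ)) := by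
  obtain ⟨A, huA, hyA, hA⟩ := exists_notMem_sum_le_forall_isTight_subset hsub hx.1 hy.1 u
  obtain ⟨v, hvA, hxy⟩ := exists_notMem_lt_of_sum_le (hx.2.trans hy.2.symm) hyA huA hu
  refine ⟨v, hxy, exists_pos_memBase_exchange hx fun S hvS huS => ?_⟩
  exact (hx.1 S).lt_of_ne fun hS => hvA (hA S huS hS hvS)
end

section
/- If B ⊆ ℤ^K is a nonempty set satisfying the M-convex exchange axiom and f(x) = ∑_j f_j(x_j) is a separable discretely convex function, then a point x* ∈ B is a global minimizer of f over B if and only if f(x*) ≤ f(x* − e_u + e_v) for all u, v such that x* − e_u + e_v ∈ B. (Local optimality over single exchanges implies global optimality.) -/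
/-!
Separable discrete convexity makes a simultaneous exchange profitable in total:
`f (x - e_u + e_v) + f (y + e_u - e_v) ≤ f x + f y` whenever `y u < x u` and `x v < y v`.
The exchange axiom of `B` upgrades, by induction on the `ℓ¹` distance, to a simultaneous one: for
`y u < x u` some `v` with `x v < y v` has both `x - e_u + e_v` and `y + e_u - e_v` in `B`. If `x` is
locally optimal, the first point costs at least `f x`, so the second costs at most `f y`; it is
closer to `x`, and induction on the distance gives `f x ≤ f y`.
-/

open Finset

theorem monotone_sub_of_two_mul_le {f : ℤ → ℝ}
    (hf : ∀ t, 2 * f t ≤ f (t - 1) + f (t + 1)) : Monotone fun t ↦ f (t + 1) - f t :=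
  monotone_int_of_le_succ fun t ↦ by
    have := hf (t + 1)
    simp only [add_sub_cancel_right] at this
    linarith

theorem map_add_one_add_map_sub_one_le {f : ℤ → ℝ} (hf : ∀ t, 2 * f t ≤ f (t - 1) + f (t + 1))
    {a b : ℤ} (hab : a < b) : f (a + 1) + f (b - 1) ≤ f a + f b := by
  have := monotone_sub_of_two_mul_le hf (Int.le_sub_one_of_lt hab)
  simp only [sub_add_cancel] at this
  linarith

variable {ι : Type*} [DecidableEq ι]

def exchange (x : ι → ℤ) (u v : ι) : ι → ℤ := x - Pi.single u 1 + Pi.single v 1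

theorem exchange_apply (x : ι → ℤ) (u v j : ι) :
    exchange x u v j = x j - (if j = u then 1 else 0) + (if j = v then 1 else 0) := by
  simp [exchange, Pi.single_apply]

def IsMConvexSet (B : Set (ι → ℤ)) : Prop :=
  ∀ x ∈ B, ∀ y ∈ B, ∀ u, y u < x u → ∃ v, x v < y v ∧ exchange x u v ∈ B

def l1dist [Fintype ι] (x y : ι → ℤ) : ℕ := ∑ j, (x j - y j).natAbs

theorem l1dist_exchange_add_two [Fintype ι] {x y : ι → ℤ} {u v : ι}
    (hu : y u < x u) (hv : x v < y v) : l1dist x (exchange y v u) + 2 = l1dist x y := by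
  have huv : u ≠ v := by rintro rfl; omega
  have key : ∀ j, (x j - y j).natAbs
      = (x j - exchange y v u j).natAbs + ((if j = u then 1 else 0) + (if j = v then 1 else 0)) := by
    intro j
    rw [exchange_apply]
    split_ifs <;> subst_vars <;> omega
  simp only [l1dist, key, sum_add_distrib, sum_ite_eq', mem_univ, if_true]

theorem sum_exchange_add_sum_exchange_le [Fintype ι] {f : ι → ℤ → ℝ}
    (hf : ∀ j t, 2 * f j t ≤ f j (t - 1) + f j (t + 1)) {x y : ι → ℤ} {u v : ι}
    (hu : y u < x u) (hv : x v < y v) :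
    ∑ j, f j (exchange x u v j) + ∑ j, f j (exchange y v u j)
      ≤ ∑ j, f j (x j) + ∑ j, f j (y j) := by
  have huv : u ≠ v := by rintro rfl; omega
  rw [← sum_add_distrib, ← sum_add_distrib]
  refine sum_le_sum fun j _ ↦ ?_
  obtain rfl | hju := eq_or_ne j u
  · simp only [exchange_apply, if_pos, if_neg huv, add_zero, sub_zero]
    linarith [map_add_one_add_map_sub_one_le (hf j) hu]
  obtain rfl | hjv := eq_or_ne j v
  · simp only [exchange_apply, if_pos, if_neg hju, add_zero, sub_zero]
    linarith [map_add_one_add_map_sub_one_le (hf j) hv]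
  · simp [exchange_apply, hju, hjv]

namespace IsMConvexSet

variable {B : Set (ι → ℤ)}

theorem exists_lt_of_ne (hB : IsMConvexSet B) {x y : ι → ℤ} (hx : x ∈ B) (hy : y ∈ B)
    (hxy : x ≠ y) : ∃ u, y u < x u := by
  by_contra! hle
  obtain ⟨w, hw⟩ := (Pi.lt_def.mp (lt_of_le_of_ne hle hxy)).2
  obtain ⟨v, hv, -⟩ := hB y hy x hx w hw
  exact (hle v).not_gt hv

/-- The inductive step of the simultaneous exchange property: `z = y + e_u + e_t - e_v - e_v'`
exceeds `y` at `t` and is below `y` only at `v` and `v'`, so the exchange of `z` towards `y` at `t`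
lands on `y + e_u - e_v'` or on `y + e_u - e_v`. -/
theorem exists_exchange_mem_both_of_exchange_mem (hB : IsMConvexSet B) {x y : ι → ℤ}
    (hy : y ∈ B) {u v t v' : ι} (hv : x v < y v) (hxv : exchange x u v ∈ B)
    (ht : y t < x t) (htu : t ≠ u) (hv' : x v' < exchange y v t v')
    (hxv' : exchange x u v' ∈ B) (hz : exchange (exchange y v t) v' u ∈ B) :
    ∃ w, x w < y w ∧ exchange x u w ∈ B ∧ exchange y w u ∈ B := by
  have htv : t ≠ v := by rintro rfl; omega
  have hv't : v' ≠ t := by rintro rfl; simp [exchange_apply, htv] at hv'; omega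
  obtain ⟨s, hs, hzs⟩ := hB _ hz y hy t (by simp [exchange_apply, htv, hv't.symm, htu])
  have hs' : s = v ∨ s = v' := by
    by_contra! h
    simp only [exchange_apply, if_neg h.1, if_neg h.2] at hs
    split_ifs at hs <;> omega
  rcases hs' with rfl | rfl
  · refine ⟨v', ?_, hxv', ?_⟩
    · simp only [exchange_apply, if_neg hv't] at hv'
      split_ifs at hv' <;> omega
    · convert hzs using 1
      simp only [exchange]
      abel
  · refine ⟨v, hv, hxv, ?_⟩
    convert hzs using 1
    simp only [exchange]
    abel

theorem exists_exchange_mem_both [Fintype ι] (hB : IsMConvexSet B) {x y : ι → ℤ}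
    (hx : x ∈ B) (hy : y ∈ B) {u : ι} (hu : y u < x u) :
    ∃ v, x v < y v ∧ exchange x u v ∈ B ∧ exchange y v u ∈ B := by
  induction hn : l1dist x y using Nat.strong_induction_on generalizing y with
  | _ n ih =>
  obtain ⟨v, hv, hxv⟩ := hB x hx y hy u hu
  obtain ⟨t, ht, hyt⟩ := hB y hy x hx v hv
  obtain rfl | htu := eq_or_ne t u
  · exact ⟨v, hv, hxv, hyt⟩
  have hvu : v ≠ u := by rintro rfl; omega
  obtain ⟨v', hv', hxv', hz⟩ := ih _ (by rw [← hn, ← l1dist_exchange_add_two ht hv]; omega)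
    hyt (by simpa [exchange_apply, htu.symm, hvu.symm] using hu) rfl
  exact hB.exists_exchange_mem_both_of_exchange_mem hy hv hxv ht htu hv' hxv' hz

theorem sum_le_of_forall_exchange [Fintype ι] (hB : IsMConvexSet B) {f : ι → ℤ → ℝ}
    (hf : ∀ j t, 2 * f j t ≤ f j (t - 1) + f j (t + 1)) {x : ι → ℤ} (hx : x ∈ B)
    (hloc : ∀ u v, exchange x u v ∈ B → ∑ j, f j (x j) ≤ ∑ j, f j (exchange x u v j))
    {y : ι → ℤ} (hy : y ∈ B) : ∑ j, f j (x j) ≤ ∑ j, f j (y j) := by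
  induction hn : l1dist x y using Nat.strong_induction_on generalizing y with
  | _ n ih =>
  obtain rfl | hxy := eq_or_ne x y
  · rfl
  obtain ⟨u, hu⟩ := hB.exists_lt_of_ne hx hy hxy
  obtain ⟨v, hv, hxv, hyv⟩ := hB.exists_exchange_mem_both hx hy hu
  have hstep := sum_exchange_add_sum_exchange_le hf hu hv
  have hfar := ih _ (by rw [← hn, ← l1dist_exchange_add_two hu hv]; omega) hyv rfl
  linarith [hloc u v hxv]

end IsMConvexSet

theorem M_convex_local_global_general {K : ℕ}
    (B : Set (Fin K → ℤ))
    (hex : ∀ x ∈ B, ∀ y ∈ B, ∀ u : Fin K, y u < x u →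
      ∃ v : Fin K, x v < y v ∧ x - Pi.single u 1 + Pi.single v 1 ∈ B)
    (f : Fin K → ℤ → ℝ)
    (hconv : ∀ j : Fin K, ∀ t : ℤ, 2 * f j t ≤ f j (t - 1) + f j (t + 1))
    (x : Fin K → ℤ) (hx : x ∈ B) :
    (∀ y ∈ B, ∑ j, f j (x j) ≤ ∑ j, f j (y j)) ↔
    (∀ u v : Fin K, x - Pi.single u 1 + Pi.single v 1 ∈ B →
      ∑ j, f j (x j) ≤ ∑ j, f j ((x - Pi.single u 1 + Pi.single v 1 : Fin K → ℤ) j)) :=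
  ⟨fun hglob _ _ hmem ↦ hglob _ hmem,
    fun hloc _ hy ↦ IsMConvexSet.sum_le_of_forall_exchange hex hconv hx hloc hy⟩

/-- Local optimality over single exchanges is equivalent to global optimality
for a separable discretely convex function over an M-convex set. -/
theorem M_convex_local_global {K : ℕ} (hK : 0 < K)
    (B : Set (Fin K → ℤ)) (hne : B.Nonempty)
    (hex : ∀ x ∈ B, ∀ y ∈ B, ∀ u : Fin K, y u < x u →
      ∃ v : Fin K, x v < y v ∧ x - Pi.single u 1 + Pi.single v 1 ∈ B)
    (f : Fin K → ℤ → ℝ)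
    (hconv : ∀ j : Fin K, ∀ t : ℤ, 2 * f j t ≤ f j (t - 1) + f j (t + 1))
    (x : Fin K → ℤ) (hx : x ∈ B) :
    (∀ y ∈ B, ∑ j, f j (x j) ≤ ∑ j, f j (y j)) ↔
    (∀ u v : Fin K, x - Pi.single u 1 + Pi.single v 1 ∈ B →
      ∑ j, f j (x j) ≤ ∑ j, f j ((x - Pi.single u 1 + Pi.single v 1 : Fin K → ℤ) j)) :=
  M_convex_local_global_general B hex f hconv x hx
end

section
/- For any x, y in an M-convex set B ⊆ ℤ^K with x ≠ y, there exist u with x_u > y_u and v with x_v < y_v such that both x − e_u + e_v ∈ B and y + e_u − e_v ∈ B. (Simultaneous exchange property of M-convex sets.) -/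
/-!
Fix `u` with `y u < x u` and induct on the `ℓ¹` distance from `x` to `y`. Exchanging `x` at `u`
gives some `v₁`, and exchanging `y` at `v₁` gives some `u₁`. If `u₁ = u` we are done; otherwise
`y₁ = y - e v₁ + e u₁` lies in `B`, is strictly closer to `x` and still has `y₁ u < x u`, so
induction yields `v` with `x - e u + e v ∈ B` and `y₁ + e u - e v ∈ B`. Exchanging the latter
point with `y` at `u₁` can only land on `y + e u - e v` or on `y + e u - e v₁`, and either one
finishes the proof.
-/

variable {ι : Type*} [DecidableEq ι]

def HasExchangeProperty (B : Set (ι → ℤ)) : Prop :=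
  ∀ x ∈ B, ∀ y ∈ B, ∀ u : ι, y u < x u →
    ∃ v : ι, x v < y v ∧ x - Pi.single u 1 + Pi.single v 1 ∈ B

def l1Dist [Fintype ι] (x y : ι → ℤ) : ℕ := ∑ i, (x i - y i).natAbs

theorem l1Dist_sub_single_add_single [Fintype ι] {x y : ι → ℤ} {a b : ι}
    (ha : x a < y a) (hb : y b < x b) :
    l1Dist x (y - Pi.single a 1 + Pi.single b 1) + 2 = l1Dist x y := by
  have hcoord : ∀ i, (x i - y i).natAbs =
      (x i - (y - Pi.single a 1 + Pi.single b 1 : ι → ℤ) i).natAbs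
        + ((Pi.single a 1 : ι → ℕ) i + (Pi.single b 1 : ι → ℕ) i) := by
    intro i
    simp only [Pi.add_apply, Pi.sub_apply, Pi.single_apply]
    grind
  simp only [l1Dist, Finset.sum_congr rfl fun i _ => hcoord i, Finset.sum_add_distrib,
    Finset.sum_pi_single', Finset.mem_univ, if_true]

namespace HasExchangeProperty

variable {B : Set (ι → ℤ)}

theorem exists_lt_of_ne (hB : HasExchangeProperty B) {x y : ι → ℤ} (hx : x ∈ B) (hy : y ∈ B)
    (hxy : x ≠ y) : ∃ u, y u < x u := by
  obtain ⟨w, hw⟩ := Function.ne_iff.mp hxy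
  rcases hw.lt_or_gt with hlt | hgt
  · obtain ⟨u, hu, -⟩ := hB y hy x hx w hlt
    exact ⟨u, hu⟩
  · exact ⟨w, hgt⟩

/-- The closing step: `z - y = e u₁ - e v₁ + e u - e v`, so the exchange of `z` with `y` at `u₁`
must lower `z` at `v₁` or at `v`. -/
theorem exchange_back (hB : HasExchangeProperty B) {y : ι → ℤ} {u v u₁ v₁ : ι} (hy : y ∈ B)
    (hz : y - Pi.single v₁ 1 + Pi.single u₁ 1 + Pi.single u 1 - Pi.single v 1 ∈ B)
    (hu₁v₁ : u₁ ≠ v₁) (hu₁v : u₁ ≠ v) :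
    y + Pi.single u 1 - Pi.single v 1 ∈ B ∨ y + Pi.single u 1 - Pi.single v₁ 1 ∈ B := by
  set z := y - Pi.single v₁ 1 + Pi.single u₁ 1 + Pi.single u 1 - Pi.single v 1
  have hzu₁ : y u₁ < z u₁ := by
    simp only [z, Pi.add_apply, Pi.sub_apply, Pi.single_apply]
    grind
  obtain ⟨t, ht, hzt⟩ := hB z hz y hy u₁ hzu₁
  by_cases htv₁ : t = v₁
  · left
    convert hzt using 1
    simp only [z, htv₁]
    abel
  by_cases htv : t = v
  · right
    convert hzt using 1
    simp only [z, htv]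
    abel
  exfalso
  simp only [z, Pi.add_apply, Pi.sub_apply, Pi.single_apply] at ht
  grind

theorem exists_simultaneous_exchange [Fintype ι] (hB : HasExchangeProperty B) {x y : ι → ℤ}
    (hx : x ∈ B) (hy : y ∈ B) {u : ι} (hu : y u < x u) :
    ∃ v, x v < y v ∧ x - Pi.single u 1 + Pi.single v 1 ∈ B ∧
      y + Pi.single u 1 - Pi.single v 1 ∈ B := by
  induction hd : l1Dist x y using Nat.strong_induction_on generalizing y with
  | _ d ih =>
  obtain ⟨v₁, hv₁, hx₁⟩ := hB x hx y hy u hu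
  obtain ⟨u₁, hu₁, hy₁⟩ := hB y hy x hx v₁ hv₁
  by_cases hu₁u : u₁ = u
  · subst hu₁u
    exact ⟨v₁, hv₁, hx₁, by rwa [← sub_add_eq_add_sub]⟩
  set y₁ := y - Pi.single v₁ 1 + Pi.single u₁ 1
  have hcoord : ∀ i, y₁ i = y i - (if i = v₁ then 1 else 0) + (if i = u₁ then 1 else 0) := by
    intro i
    simp only [y₁, Pi.add_apply, Pi.sub_apply, Pi.single_apply]
  have hu₁v₁ : u₁ ≠ v₁ := by rintro rfl; omega
  have hcloser : l1Dist x y₁ < d := by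
    have h : l1Dist x y₁ + 2 = l1Dist x y := l1Dist_sub_single_add_single hv₁ hu₁
    omega
  have hy₁u : y₁ u < x u := by
    rw [hcoord, if_neg (Ne.symm hu₁u), if_neg (by rintro rfl; omega)]
    omega
  obtain ⟨v, hv, hxv, hy₂⟩ := ih _ hcloser hy₁ hy₁u rfl
  have hvu₁ : v ≠ u₁ := by
    rintro rfl
    rw [hcoord, if_neg hu₁v₁, if_pos rfl] at hv
    omega
  rcases hB.exchange_back hy hy₂ hu₁v₁ hvu₁.symm with hyv | hyv₁
  · refine ⟨v, ?_, hxv, hyv⟩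
    rw [hcoord, if_neg hvu₁] at hv
    split_ifs at hv <;> omega
  · exact ⟨v₁, hv₁, hx₁, hyv₁⟩

end HasExchangeProperty

theorem M_convex_simultaneous_exchange_general {K : ℕ}
    (B : Set (Fin K → ℤ))
    (hex : ∀ x ∈ B, ∀ y ∈ B, ∀ u : Fin K, y u < x u →
      ∃ v : Fin K, x v < y v ∧ x - Pi.single u 1 + Pi.single v 1 ∈ B)
    (x y : Fin K → ℤ) (hx : x ∈ B) (hy : y ∈ B) (hxy : x ≠ y) :
    ∃ u v : Fin K, y u < x u ∧ x v < y v ∧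
      x - Pi.single u 1 + Pi.single v 1 ∈ B ∧
      y + Pi.single u 1 - Pi.single v 1 ∈ B := by
  obtain ⟨u, hu⟩ := HasExchangeProperty.exists_lt_of_ne hex hx hy hxy
  obtain ⟨v, hv, hxv, hyv⟩ := HasExchangeProperty.exists_simultaneous_exchange hex hx hy hu
  exact ⟨u, v, hu, hv, hxv, hyv⟩

/-- Simultaneous exchange property of M-convex sets. -/
theorem M_convex_simultaneous_exchange {K : ℕ} (hK : 0 < K)
    (B : Set (Fin K → ℤ)) (hne : B.Nonempty)
    (hex : ∀ x ∈ B, ∀ y ∈ B, ∀ u : Fin K, y u < x u →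
      ∃ v : Fin K, x v < y v ∧ x - Pi.single u 1 + Pi.single v 1 ∈ B)
    (x y : Fin K → ℤ) (hx : x ∈ B) (hy : y ∈ B) (hxy : x ≠ y) :
    ∃ u v : Fin K, y u < x u ∧ x v < y v ∧
      x - Pi.single u 1 + Pi.single v 1 ∈ B ∧
      y + Pi.single u 1 - Pi.single v 1 ∈ B :=
  M_convex_simultaneous_exchange_general B hex x y hx hy hxy
end
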